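/- Let V ⊂ ℝ² be a Euclidean TSP instance and T an optimal tour for V. If V' is a subdivision for (V,T), then the tour T' induced by V' is an optimal tour for V' (and has the same length as T). -/

import Mathlib

open Classical

/-- The `p`-norm distance between two points of `ℝ²`. For `p = 2` this is the
Euclidean distance. -/
noncomputable def pdist (p : ℝ) (a b : ℝ × ℝ) : ℝ :=
  (|a.1 - b.1| ^ p + |a.2 - b.2| ^ p) ^ (1 / p)

/-- The length of the closed polygon (cyclic sequence) given by the list `L`. -/
noncomputable def cycleLength (p : ℝ) (L : List (ℝ × ℝ)) : ℝ :=
  ((L.zip (L.rotate 1)).map fun e => pdist p e.1 e.2).sum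

/-- `L` is a tour (Hamiltonian cycle) of the finite point set `V`. -/
def IsTour (V : Finset (ℝ × ℝ)) (L : List (ℝ × ℝ)) : Prop :=
  L.Nodup ∧ L.toFinset = V

/-- `L` is an optimal (shortest) tour for `V`. -/
def IsOptimalTour (p : ℝ) (V : Finset (ℝ × ℝ)) (L : List (ℝ × ℝ)) : Prop :=
  IsTour V L ∧ ∀ L' : List (ℝ × ℝ), IsTour V L' → cycleLength p L ≤ cycleLength p L'

/-- The tour `T'` is induced by subdividing the tour `T`: for each vertex `a` of
`T` there is a list `F a` of points, all lying in the interior of the tour edge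
leaving `a` and ordered along this edge, such that `T'` is obtained from `T` by
inserting, after each vertex `a`, the points `F a`.  In particular `T'` and `T`
trace the same polygon in `ℝ²`. -/
def InducedBy (T T' : List (ℝ × ℝ)) : Prop :=
  ∃ F : (ℝ × ℝ) → List (ℝ × ℝ),
    T' = (T.map fun a => a :: F a).flatten ∧
    ∀ e ∈ T.zip (T.rotate 1),
      (∀ z ∈ F e.1, z ∈ openSegment ℝ e.1 e.2) ∧
      List.Chain' (fun u v => v ∈ segment ℝ u e.2) (e.1 :: F e.1)

/-!
Inserting points on an edge `[a, b]` in their order along it does not change the length of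
the edge, so `T'` is exactly as long as `T`. Conversely, deleting the points of `V' \ V` from
any tour of `V'` leaves a tour of `V` which, by the triangle inequality, is no longer. Hence
every tour of `V'` is at least as long as `T`, that is, as `T'`.
-/

open scoped ENNReal

section Polyline

variable {E : Type*} [PseudoMetricSpace E]

noncomputable def polylineLength : List E → ℝ
  | a :: b :: l => dist a b + polylineLength (b :: l)
  | _ => 0

noncomputable def polygonLength (l : List E) : ℝ :=
  ((l.zip (l.rotate 1)).map fun e => dist e.1 e.2).sum

@[simp] lemma polylineLength_nil : polylineLength ([] : List E) = 0 := rfl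

@[simp] lemma polylineLength_singleton (a : E) : polylineLength [a] = 0 := rfl

@[simp] lemma polylineLength_cons_cons (a b : E) (l : List E) :
    polylineLength (a :: b :: l) = dist a b + polylineLength (b :: l) := rfl

lemma polylineLength_append_cons (l₁ l₂ : List E) (a : E) :
    polylineLength (l₁ ++ a :: l₂) = polylineLength (l₁ ++ [a]) + polylineLength (a :: l₂) := by
  induction l₁ with
  | nil => simp
  | cons b l ih =>
    cases l with
    | nil => simp
    | cons c l => simp only [List.cons_append, polylineLength_cons_cons] at ih ⊢; rw [ih, add_assoc]

lemma polylineLength_append_singleton_le (l : List E) (a b : E) :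
    polylineLength (l ++ [b]) ≤ polylineLength (l ++ [a]) + dist a b := by
  induction l with
  | nil => simp
  | cons c l ih =>
    cases l with
    | nil => simpa using dist_triangle c a b
    | cons d l => simp only [List.cons_append, polylineLength_cons_cons] at ih ⊢; linarith

lemma polylineLength_cons_le (a b : E) (l : List E) :
    polylineLength (a :: l) ≤ dist a b + polylineLength (b :: l) := by
  cases l with
  | nil => simp
  | cons c l => simp only [polylineLength_cons_cons]; linarith [dist_triangle a b c]

lemma polylineLength_cons_le_of_sublist {l₁ l₂ : List E} (h : l₁.Sublist l₂) (a : E) :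
    polylineLength (a :: l₁) ≤ polylineLength (a :: l₂) := by
  induction h generalizing a with
  | slnil => rfl
  | cons b _ ih =>
    calc polylineLength (a :: _) ≤ dist a b + polylineLength (b :: _) :=
          polylineLength_cons_le a b _
      _ ≤ polylineLength (a :: b :: _) := add_le_add_right (ih b) _
  | cons_cons b _ ih => simpa using ih b

lemma polygonLength_cons (a : E) (l : List E) :
    polygonLength (a :: l) = polylineLength (a :: l ++ [a]) := by
  suffices ∀ b, ((((a :: l).zip (l ++ [b])).map fun e => dist e.1 e.2).sum
      = polylineLength (a :: l ++ [b])) by simpa [polygonLength] using this a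
  induction l generalizing a with
  | nil => simp
  | cons c l ih => intro b; simp [ih c b]

lemma polygonLength_le_cons (a : E) (l : List E) : polygonLength l ≤ polygonLength (a :: l) := by
  cases l with
  | nil => simp [polygonLength]
  | cons b l =>
    have h := polylineLength_append_singleton_le (b :: l) a b
    simp only [polygonLength_cons, List.cons_append, polylineLength_cons_cons] at h ⊢
    linarith

lemma polygonLength_le_of_sublist {l₁ l₂ : List E} (h : l₁.Sublist l₂) :
    polygonLength l₁ ≤ polygonLength l₂ := by
  induction h with
  | slnil => rfl
  | cons a _ ih => exact ih.trans (polygonLength_le_cons a _)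
  | cons_cons a h _ =>
    rw [polygonLength_cons, polygonLength_cons]
    exact polylineLength_cons_le_of_sublist (h.append_right [a]) a

lemma polylineLength_flatten_append_singleton (F : E → List E) (l : List E) (z : E) :
    polylineLength ((l.map fun a => a :: F a).flatten ++ [z]) =
      ((l.zip (l.tail ++ [z])).map fun e => polylineLength (e.1 :: F e.1 ++ [e.2])).sum := by
  induction l with
  | nil => simp
  | cons a l ih =>
    cases l with
    | nil => simp
    | cons b l =>
      have hsplit : ((a :: b :: l).map fun a => a :: F a).flatten ++ [z] =
          (a :: F a) ++ b :: (F b ++ (l.map fun a => a :: F a).flatten ++ [z]) := by simp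
      have htail : b :: (F b ++ (l.map fun a => a :: F a).flatten ++ [z]) =
          ((b :: l).map fun a => a :: F a).flatten ++ [z] := by simp
      rw [hsplit, polylineLength_append_cons, htail, ih]
      simp

end Polyline

section Subdivision

variable {E : Type*} [SeminormedAddCommGroup E] [NormedSpace ℝ E]

lemma polylineLength_eq_dist_of_isChain {a b : E} {l : List E}
    (h : (a :: l).IsChain fun u v => v ∈ segment ℝ u b) :
    polylineLength (a :: l ++ [b]) = dist a b := by
  induction l generalizing a with
  | nil => simp
  | cons c l ih =>
    rw [List.isChain_cons_cons] at h
    simp only [List.cons_append, polylineLength_cons_cons] at ih ⊢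
    rw [ih h.2, dist_add_dist_of_mem_segment h.1]

lemma polygonLength_flatten_of_isChain (F : E → List E) (l : List E)
    (h : ∀ e ∈ l.zip (l.rotate 1), (e.1 :: F e.1).IsChain fun u v => v ∈ segment ℝ u e.2) :
    polygonLength ((l.map fun a => a :: F a).flatten) = polygonLength l := by
  cases l with
  | nil => simp
  | cons a l =>
    have hrot : (a :: l).rotate 1 = l ++ [a] := by simp
    have hhead : ((a :: l).map fun a => a :: F a).flatten =
        a :: (F a ++ (l.map fun a => a :: F a).flatten) := by simp
    rw [hhead, polygonLength_cons, ← hhead, polylineLength_flatten_append_singleton, polygonLength,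
      hrot]
    rw [hrot] at h
    exact congrArg List.sum
      (List.map_congr_left fun e he => polylineLength_eq_dist_of_isChain (h e he))

end Subdivision

lemma pdist_toReal_eq_dist (p : ℝ≥0∞) [Fact (1 ≤ p)] (hp : p ≠ ∞) (a b : ℝ × ℝ) :
    pdist p.toReal a b = dist (WithLp.toLp p a) (WithLp.toLp p b) := by
  have hp₀ : 0 < p.toReal := ENNReal.toReal_pos (zero_lt_one.trans_le Fact.out).ne' hp
  simp [WithLp.prod_dist_eq_add hp₀, pdist, Real.dist_eq]

lemma cycleLength_toReal_eq_polygonLength (p : ℝ≥0∞) [Fact (1 ≤ p)] (hp : p ≠ ∞)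
    (L : List (ℝ × ℝ)) : cycleLength p.toReal L = polygonLength (L.map (WithLp.toLp p)) := by
  simp [cycleLength, polygonLength, ← List.map_rotate, List.zip_map, pdist_toReal_eq_dist p hp,
    Function.comp_def]

lemma cycleLength_two_eq_polygonLength (L : List (ℝ × ℝ)) :
    cycleLength 2 L = polygonLength (L.map (WithLp.toLp 2)) := by
  simpa using cycleLength_toReal_eq_polygonLength 2 ENNReal.ofNat_ne_top L

lemma WithLp.toLp_mem_segment (p : ℝ≥0∞) {V : Type*} [AddCommGroup V] [Module ℝ V] {u v w : V}
    (h : v ∈ segment ℝ u w) :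
    WithLp.toLp p v ∈ segment ℝ (WithLp.toLp p u) (WithLp.toLp p w) := by
  obtain ⟨s, t, hs, ht, hst, rfl⟩ := h
  exact ⟨s, t, hs, ht, hst, by simp⟩

lemma cycleLength_two_le_of_sublist {l₁ l₂ : List (ℝ × ℝ)} (h : l₁.Sublist l₂) :
    cycleLength 2 l₁ ≤ cycleLength 2 l₂ := by
  simpa only [cycleLength_two_eq_polygonLength] using polygonLength_le_of_sublist (h.map _)

lemma cycleLength_two_flatten_of_isChain (F : ℝ × ℝ → List (ℝ × ℝ)) (T : List (ℝ × ℝ))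
    (h : ∀ e ∈ T.zip (T.rotate 1), (e.1 :: F e.1).IsChain fun u v => v ∈ segment ℝ u e.2) :
    cycleLength 2 ((T.map fun a => a :: F a).flatten) = cycleLength 2 T := by
  set G : WithLp 2 (ℝ × ℝ) → List (WithLp 2 (ℝ × ℝ)) := fun x => (F x.ofLp).map (WithLp.toLp 2)
  have hmap : ((T.map fun a => a :: F a).flatten).map (WithLp.toLp 2) =
      ((T.map (WithLp.toLp 2)).map fun x => x :: G x).flatten := by
    simp [G, List.map_flatten, Function.comp_def]
  rw [cycleLength_two_eq_polygonLength, cycleLength_two_eq_polygonLength, hmap,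
    polygonLength_flatten_of_isChain]
  intro e he
  rw [← List.map_rotate, List.zip_map, List.mem_map] at he
  obtain ⟨⟨a, b⟩, hab, rfl⟩ := he
  simp only [Prod.map, G]
  rw [← List.map_cons, List.isChain_map]
  exact (h _ hab).imp fun u v => WithLp.toLp_mem_segment 2

lemma IsTour.filter_mem {V V' : Finset (ℝ × ℝ)} {L : List (ℝ × ℝ)} (hL : IsTour V' L)
    (hV : V ⊆ V') : IsTour V (L.filter (· ∈ V)) := by
  have hVL : ∀ x ∈ V, x ∈ L := fun x hx => List.mem_toFinset.mp (hL.2 ▸ hV hx)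
  refine ⟨hL.1.filter _, Finset.ext fun x => ?_⟩
  simpa using hVL x

lemma InducedBy.sublist {T T' : List (ℝ × ℝ)} (h : InducedBy T T') : T.Sublist T' := by
  obtain ⟨F, rfl, -⟩ := h
  induction T with
  | nil => simp
  | cons a T ih => simpa using ih.trans (List.sublist_append_right (F a) _)

theorem subdivision_preserves_optimality (V V' : Finset (ℝ × ℝ))
    (T T' : List (ℝ × ℝ)) (hopt : IsOptimalTour 2 V T)
    (hT' : IsTour V' T') (hind : InducedBy T T') :
    IsOptimalTour 2 V' T' ∧ cycleLength 2 T' = cycleLength 2 T := by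
  obtain ⟨⟨-, hTV⟩, hTmin⟩ := hopt
  have hVV' : V ⊆ V' := by
    intro x hx
    rw [← hTV, List.mem_toFinset] at hx
    rw [← hT'.2, List.mem_toFinset]
    exact hind.sublist.subset hx
  obtain ⟨F, rfl, hF⟩ := hind
  have hlen : cycleLength 2 (T.map fun a => a :: F a).flatten = cycleLength 2 T :=
    cycleLength_two_flatten_of_isChain F T fun e he => (hF e he).2
  refine ⟨⟨hT', fun L hL => ?_⟩, hlen⟩
  calc _ = cycleLength 2 T := hlen
    _ ≤ cycleLength 2 (L.filter (· ∈ V)) := hTmin _ (hL.filter_mem hVV')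
    _ ≤ cycleLength 2 L := cycleLength_two_le_of_sublist List.filter_sublist
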